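/- arXiv:2408.10982 — 3 statements merged into one kernel-verified Lean document; each statement's English description precedes it below -/
import Mathlib

section
/- For a nonnegative monotone submodular function f with f(∅)=0 on a finite ground set, the standard greedy algorithm that iteratively adds the element with maximum marginal gain, run for k steps, produces a set S_k with f(S_k) ≥ (1 − (1−1/k)^k)·OPT ≥ (1 − 1/e)·OPT, where OPT = max_{|T|≤k} f(T). -/
/-!
If `T` is an optimal set, submodularity bounds `f T - f A` by the sum of the marginal gains of the
elements of `T` over `A`, hence by `k` times the largest marginal gain, which is the gain of the
greedy step. So each greedy step shrinks the gap `OPT - f (S i)` by a factor `1 - 1/k`, and after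
`k` steps the gap is at most `(1 - 1/k)^k · OPT ≤ OPT / e`.
-/

section Submodular

variable {X : Type*} [DecidableEq X] {f : Finset X → ℝ}

lemma le_add_sum_marginal_gain (hmono : ∀ A B : Finset X, A ⊆ B → f A ≤ f B)
    (hsub : ∀ A B : Finset X, A ⊆ B → ∀ x : X, x ∉ B →
        f (insert x A) - f A ≥ f (insert x B) - f B)
    (A T : Finset X) :
    f (A ∪ T) ≤ f A + ∑ x ∈ T, (f (insert x A) - f A) := by
  induction T using Finset.induction_on with
  | empty => simp
  | @insert a T ha ih =>
    have hgain_nonneg : 0 ≤ f (insert a A) - f A :=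
      sub_nonneg.mpr (hmono _ _ (Finset.subset_insert a A))
    rw [Finset.sum_insert ha, Finset.union_insert]
    by_cases haAT : a ∈ A ∪ T
    · rw [Finset.insert_eq_self.mpr haAT]
      linarith
    · linarith [hsub A (A ∪ T) Finset.subset_union_left a haAT]

lemma sub_le_card_mul_max_marginal_gain (hmono : ∀ A B : Finset X, A ⊆ B → f A ≤ f B)
    (hsub : ∀ A B : Finset X, A ⊆ B → ∀ x : X, x ∉ B →
        f (insert x A) - f A ≥ f (insert x B) - f B)
    {A : Finset X} {x : X} (hx : ∀ y : X, f (insert y A) - f A ≤ f (insert x A) - f A)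
    (T : Finset X) :
    f T - f A ≤ T.card * (f (insert x A) - f A) := by
  have hsum : ∑ y ∈ T, (f (insert y A) - f A) ≤ T.card * (f (insert x A) - f A) :=
    (Finset.sum_le_sum fun y _ => hx y).trans_eq (by rw [Finset.sum_const, nsmul_eq_mul])
  linarith [hmono T (A ∪ T) Finset.subset_union_right, le_add_sum_marginal_gain hmono hsub A T]

lemma sub_insert_le_one_sub_one_div_mul (hmono : ∀ A B : Finset X, A ⊆ B → f A ≤ f B)
    (hsub : ∀ A B : Finset X, A ⊆ B → ∀ x : X, x ∉ B →
        f (insert x A) - f A ≥ f (insert x B) - f B)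
    {A T : Finset X} {k : ℕ} (hT : T.card ≤ k) {x : X}
    (hx : ∀ y : X, f (insert y A) - f A ≤ f (insert x A) - f A) :
    f T - f (insert x A) ≤ (1 - 1 / (k : ℝ)) * (f T - f A) := by
  have hgain_nonneg : 0 ≤ f (insert x A) - f A :=
    sub_nonneg.mpr (hmono _ _ (Finset.subset_insert x A))
  have hgap : f T - f A ≤ (f (insert x A) - f A) * k :=
    calc f T - f A ≤ T.card * (f (insert x A) - f A) :=
          sub_le_card_mul_max_marginal_gain hmono hsub hx T
      _ ≤ (f (insert x A) - f A) * k := by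
          rw [mul_comm]; gcongr
  have : (f T - f A) / k ≤ f (insert x A) - f A :=
    div_le_of_le_mul₀ k.cast_nonneg hgain_nonneg hgap
  linarith [mul_one_div (f T - f A) (k : ℝ)]

end Submodular

lemma one_sub_one_div_natCast_nonneg (k : ℕ) : 0 ≤ 1 - 1 / (k : ℝ) := by
  rcases k.eq_zero_or_pos with rfl | hk
  · simp
  · exact sub_nonneg.mpr (div_le_one_of_le₀ (by exact_mod_cast hk) k.cast_nonneg)

theorem greedy_submodular_bound_general {X : Type*} [DecidableEq X] (f : Finset X → ℝ)
    (k : ℕ) (hk : 1 ≤ k)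
    (hempty : f ∅ = 0)
    (hmono : ∀ A B : Finset X, A ⊆ B → f A ≤ f B)
    (hsub : ∀ A B : Finset X, A ⊆ B → ∀ x : X, x ∉ B →
        f (insert x A) - f A ≥ f (insert x B) - f B)
    (S : ℕ → Finset X) (hS0 : S 0 = ∅)
    (hgreedy : ∀ i < k, ∃ x : X, x ∉ S i ∧ S (i + 1) = insert x (S i) ∧
        ∀ y : X, f (insert y (S i)) - f (S i) ≤ f (insert x (S i)) - f (S i))
    (OPT : ℝ)
    (hOPT : IsGreatest {y : ℝ | ∃ T : Finset X, T.card ≤ k ∧ f T = y} OPT) :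
    f (S k) ≥ (1 - (1 - 1 / (k : ℝ)) ^ k) * OPT ∧
    (1 - (1 - 1 / (k : ℝ)) ^ k) * OPT ≥ (1 - 1 / Real.exp 1) * OPT := by
  obtain ⟨T, hTk, rfl⟩ := hOPT.1
  have hOPT_nonneg : 0 ≤ f T := hempty ▸ hOPT.2 ⟨∅, by simp, rfl⟩
  have hgap : f T - f (S k) ≤ (1 - 1 / (k : ℝ)) ^ k * f T := by
    simpa [hS0, hempty] using
      le_geom (u := fun i => f T - f (S i)) (one_sub_one_div_natCast_nonneg k) k fun i hi => by
        obtain ⟨x, -, hSx, hx⟩ := hgreedy i hi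
        simpa only [hSx] using sub_insert_le_one_sub_one_div_mul hmono hsub hTk hx
  have hexp : (1 - 1 / (k : ℝ)) ^ k ≤ 1 / Real.exp 1 := by
    simpa [Real.exp_neg] using
      Real.one_sub_div_pow_le_exp_neg (n := k) (t := 1) (by exact_mod_cast hk)
  constructor
  · linarith
  · exact mul_le_mul_of_nonneg_right (by linarith) hOPT_nonneg

/-- Greedy for monotone submodular maximization under a cardinality constraint:
`f (S k) ≥ (1 - (1-1/k)^k) · OPT ≥ (1 - 1/e) · OPT`. -/
theorem greedy_submodular_bound {X : Type*} [DecidableEq X] (f : Finset X → ℝ)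
    (k : ℕ) (hk : 1 ≤ k)
    (hnonneg : ∀ S : Finset X, 0 ≤ f S) (hempty : f ∅ = 0)
    (hmono : ∀ A B : Finset X, A ⊆ B → f A ≤ f B)
    (hsub : ∀ A B : Finset X, A ⊆ B → ∀ x : X, x ∉ B →
        f (insert x A) - f A ≥ f (insert x B) - f B)
    (S : ℕ → Finset X) (hS0 : S 0 = ∅)
    (hgreedy : ∀ i < k, ∃ x : X, x ∉ S i ∧ S (i + 1) = insert x (S i) ∧
        ∀ y : X, f (insert y (S i)) - f (S i) ≤ f (insert x (S i)) - f (S i))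
    (OPT : ℝ)
    (hOPT : IsGreatest {y : ℝ | ∃ T : Finset X, T.card ≤ k ∧ f T = y} OPT) :
    f (S k) ≥ (1 - (1 - 1 / (k : ℝ)) ^ k) * OPT ∧
    (1 - (1 - 1 / (k : ℝ)) ^ k) * OPT ≥ (1 - 1 / Real.exp 1) * OPT :=
  greedy_submodular_bound_general f k hk hempty hmono hsub S hS0 hgreedy OPT hOPT
end

section
/- Truncated greedy for maximum coverage: if the greedy algorithm for max-k-cover is run but stopped after selecting only ⌈αk⌉ sets (for 0 < α ≤ 1), then the number of elements covered is at least (1 − (1−1/k)^{αk})·OPT ≥ (1 − e^{−α})·OPT, where OPT is the maximum number of elements coverable by any k sets. -/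
/-- Truncated greedy for maximum coverage: running greedy for `⌈α·k⌉` steps covers at
least `(1 - (1-1/k)^{αk}) · OPT ≥ (1 - e^{-α}) · OPT` elements. -/
theorem truncated_greedy_cover {V U : Type*} [DecidableEq V] [DecidableEq U]
    (𝒮 : V → Finset U) (k : ℕ) (hk : 1 ≤ k) (α : ℝ) (hα0 : 0 < α) (hα1 : α ≤ 1)
    (t : ℕ) (ht : t = ⌈α * (k : ℝ)⌉₊)
    (C : Finset V → ℕ) (hC : ∀ S : Finset V, C S = (S.biUnion 𝒮).card)
    (S : ℕ → Finset V) (hS0 : S 0 = ∅)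
    (hgreedy : ∀ i : ℕ, ∃ x : V, S (i + 1) = insert x (S i) ∧
        ∀ y : V, C (insert y (S i)) ≤ C (insert x (S i)))
    (OPT : ℕ)
    (hOPT : IsGreatest {c : ℕ | ∃ T : Finset V, T.card ≤ k ∧ c = C T} OPT) :
    (C (S t) : ℝ) ≥ (1 - (1 - 1 / (k : ℝ)) ^ (α * (k : ℝ))) * OPT ∧
    (1 - (1 - 1 / (k : ℝ)) ^ (α * (k : ℝ))) * (OPT : ℝ) ≥ (1 - Real.exp (-α)) * OPT := by
  have hk0 : (0 : ℝ) < (k : ℝ) := by exact_mod_cast hk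
  have hk0' : (k : ℝ) ≠ 0 := ne_of_gt hk0
  have hbase0 : (0 : ℝ) ≤ 1 - 1 / (k : ℝ) := by
    have : 1 / (k : ℝ) ≤ 1 := by
      rw [div_le_one hk0]; exact_mod_cast hk
    linarith
  have hαk0 : 0 < α * (k : ℝ) := mul_pos hα0 hk0
  -- second conjunct's core: (1-1/k)^(αk) ≤ exp(-α)
  have hexp : (1 - 1 / (k : ℝ)) ^ (α * (k : ℝ)) ≤ Real.exp (-α) := by
    have h1 : (1 : ℝ) - 1 / k ≤ Real.exp (-(1 / k)) := by
      have := Real.add_one_le_exp (-(1 / (k : ℝ)))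
      linarith
    calc (1 - 1 / (k : ℝ)) ^ (α * (k : ℝ))
        ≤ (Real.exp (-(1 / k))) ^ (α * (k : ℝ)) :=
          Real.rpow_le_rpow hbase0 h1 (le_of_lt hαk0)
      _ = Real.exp (-α) := by
          rw [Real.rpow_def_of_pos (Real.exp_pos _), Real.log_exp]
          congr 1
          field_simp
  have hOPT0 : (0 : ℝ) ≤ (OPT : ℝ) := Nat.cast_nonneg _
  -- key per-step inequality
  have key : ∀ i : ℕ, (OPT : ℝ) - C (S (i + 1)) ≤ (1 - 1 / k) * ((OPT : ℝ) - C (S i)) := by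
    intro i
    obtain ⟨T, hTk, hTO⟩ := hOPT.1
    by_cases hT : T = ∅
    · -- OPT = 0
      have hO0 : OPT = 0 := by
        rw [hTO, hC, hT]; simp
      obtain ⟨x, hx1, hx2⟩ := hgreedy i
      have hmono : (C (S i) : ℝ) ≤ C (S (i + 1)) := by
        have h1 : ((S i).biUnion 𝒮).card ≤ ((insert x (S i)).biUnion 𝒮).card :=
          Finset.card_le_card (Finset.biUnion_subset_biUnion_of_subset_left _
            (Finset.subset_insert _ _))
        rw [hx1]
        exact_mod_cast (hC (S i)) ▸ (hC (insert x (S i))) ▸ h1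
      have hb1 : 1 - 1 / (k : ℝ) ≤ 1 := by
        have : 0 < 1 / (k : ℝ) := by positivity
        linarith
      have hmul : (1 - 1 / (k : ℝ)) * (C (S i) : ℝ) ≤ (C (S i) : ℝ) :=
        mul_le_of_le_one_left (Nat.cast_nonneg _) hb1
      rw [hO0]
      push_cast
      nlinarith [hmono, hmul]
    · have hTne : T.Nonempty := Finset.nonempty_iff_ne_empty.mpr hT
      set A : Finset U := (S i).biUnion 𝒮 with hA
      obtain ⟨v, hvT, hvmax⟩ := Finset.exists_max_image T (fun v => (𝒮 v \ A).card) hTne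
      set M : ℕ := (𝒮 v \ A).card with hM
      -- OPT ≤ k * M + C (S i)
      have h1 : OPT ≤ k * M + C (S i) := by
        have hXA : (T.biUnion 𝒮 \ A).card ≤ ∑ w ∈ T, (𝒮 w \ A).card := by
          have hsub : T.biUnion 𝒮 \ A ⊆ T.biUnion (fun w => 𝒮 w \ A) := by
            intro u hu
            rw [Finset.mem_sdiff, Finset.mem_biUnion] at hu
            obtain ⟨⟨w, hwT, hw⟩, hu2⟩ := hu
            exact Finset.mem_biUnion.mpr ⟨w, hwT, Finset.mem_sdiff.mpr ⟨hw, hu2⟩⟩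
          exact le_trans (Finset.card_le_card hsub) Finset.card_biUnion_le
        have hsum : ∑ w ∈ T, (𝒮 w \ A).card ≤ T.card * M := by
          simpa [smul_eq_mul] using Finset.sum_le_card_nsmul T (fun w => (𝒮 w \ A).card) M
            (fun w hw => hvmax w hw)
        calc OPT = (T.biUnion 𝒮).card := by rw [hTO, hC]
          _ ≤ (T.biUnion 𝒮 \ A).card + A.card := Finset.card_le_card_sdiff_add_card
          _ ≤ T.card * M + A.card := by omega
          _ ≤ k * M + C (S i) := by
              rw [hC]
              exact Nat.add_le_add (Nat.mul_le_mul_right M hTk) le_rfl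
      -- C (S (i+1)) ≥ M + C (S i)
      obtain ⟨x, hx1, hx2⟩ := hgreedy i
      have h2 : M + C (S i) ≤ C (S (i + 1)) := by
        have hv : C (insert v (S i)) = M + C (S i) := by
          rw [hC, hC, Finset.biUnion_insert, ← Finset.card_sdiff_add_card]
        rw [hx1]
        calc M + C (S i) = C (insert v (S i)) := hv.symm
          _ ≤ C (insert x (S i)) := hx2 v
      -- conclude in ℝ
      have h1' : (OPT : ℝ) ≤ (k : ℝ) * M + C (S i) := by exact_mod_cast h1
      have h2' : (M : ℝ) + C (S i) ≤ C (S (i + 1)) := by exact_mod_cast h2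
      have hgoal : (k : ℝ) * ((OPT : ℝ) - C (S (i + 1))) ≤
          ((k : ℝ) - 1) * ((OPT : ℝ) - C (S i)) := by nlinarith
      have : (1 - 1 / (k : ℝ)) = ((k : ℝ) - 1) / k := by field_simp
      rw [this, div_mul_eq_mul_div, le_div_iff₀ hk0, mul_comm]
      exact hgoal
  -- induction: OPT - C (S i) ≤ (1-1/k)^i * OPT
  have ind : ∀ i : ℕ, (OPT : ℝ) - C (S i) ≤ (1 - 1 / (k : ℝ)) ^ i * OPT := by
    intro i
    induction i with
    | zero => simp [hS0, hC]
    | succ n ih =>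
        calc (OPT : ℝ) - C (S (n + 1)) ≤ (1 - 1 / k) * ((OPT : ℝ) - C (S n)) := key n
          _ ≤ (1 - 1 / k) * ((1 - 1 / (k : ℝ)) ^ n * OPT) :=
              mul_le_mul_of_nonneg_left ih hbase0
          _ = (1 - 1 / (k : ℝ)) ^ (n + 1) * OPT := by ring
  -- bridge nat pow to rpow
  have hpow : (1 - 1 / (k : ℝ)) ^ t ≤ (1 - 1 / (k : ℝ)) ^ (α * (k : ℝ)) := by
    have htk : α * (k : ℝ) ≤ (t : ℝ) := by rw [ht]; exact Nat.le_ceil _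
    rcases eq_or_lt_of_le hbase0 with hb | hb
    · -- base = 0
      have ht1 : 1 ≤ t := by
        rw [ht]; exact Nat.ceil_pos.mpr hαk0
      rw [← hb, Real.zero_rpow (ne_of_gt hαk0)]
      exact le_of_eq (zero_pow (by omega))
    · have hb1 : 1 - 1 / (k : ℝ) ≤ 1 := by
        have : 0 < 1 / (k : ℝ) := by positivity
        linarith
      calc (1 - 1 / (k : ℝ)) ^ t = (1 - 1 / (k : ℝ)) ^ ((t : ℕ) : ℝ) :=
            (Real.rpow_natCast _ _).symm
        _ ≤ (1 - 1 / (k : ℝ)) ^ (α * (k : ℝ)) :=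
            Real.rpow_le_rpow_of_exponent_ge hb hb1 htk
  constructor
  · have h := ind t
    nlinarith [ind t, mul_le_mul_of_nonneg_right hpow hOPT0]
  · nlinarith [mul_le_mul_of_nonneg_right hexp hOPT0]
end

section
/- Lazy greedy correctness: for a monotone submodular function f, if at some step the stale (previously computed) marginal gain stored for the top element v of a max-priority queue, once recomputed with respect to the current solution S, is at least the stored key of the next element in the queue, then v is a valid greedy choice, i.e., f(S∪{v}) − f(S) ≥ f(S∪{w}) − f(S) for all elements w remaining in the queue. -/
/-- Lazy greedy correctness: stale keys (marginal gains computed at earlier subsets) upper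
bound current marginal gains; if the recomputed gain of `v` is at least the largest stored
key of the remaining queue, then `v` is a valid greedy choice. -/
theorem lazy_greedy_correct {X : Type*} [DecidableEq X] (f : Finset X → ℝ)
    (hmono : ∀ A B : Finset X, A ⊆ B → f A ≤ f B)
    (hsub : ∀ A B : Finset X, A ⊆ B → ∀ x : X, x ∉ B →
        f (insert x A) - f A ≥ f (insert x B) - f B)
    (S Q : Finset X) (v : X) (key : X → ℝ) (Sprev : X → Finset X)
    (hprev : ∀ w ∈ Q, Sprev w ⊆ S ∧ key w = f (insert w (Sprev w)) - f (Sprev w))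
    (κ : ℝ) (htop : ∀ w ∈ Q, key w ≤ κ)
    (hv : f (insert v S) - f S ≥ κ) :
    ∀ w ∈ Q, f (insert v S) - f S ≥ f (insert w S) - f S := by
  intro w hw
  by_cases hwS : w ∈ S
  · rw [Finset.insert_eq_self.mpr hwS]
    have := hmono S (insert v S) (Finset.subset_insert v S)
    linarith
  · obtain ⟨hsub', hkey⟩ := hprev w hw
    have h1 := hsub (Sprev w) S hsub' w hwS
    have h2 := htop w hw
    linarith [hkey ▸ h2]
end
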